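/- Let H ∈ (0, 1/2]. There exists a constant C, depending only on H, such that for all real numbers t ≤ T ≤ t₁ ≤ t₂ ≤ t₃ with t₁ < t₃: (∫_t^T ((t₂−s)^{H−1/2} − ((t₃−t₂)/(t₃−t₁))(t₁−s)^{H−1/2} − ((t₂−t₁)/(t₃−t₁))(t₃−s)^{H−1/2})² ds)^{1/2} ≤ C (t₃−t₁)² (t₃−T)^{H−2}. -/

import Mathlib

/-!
Put `x = t₁ - s`, `Δ = t₃ - t₁` and `p = H - 1/2 ∈ (-1/2, 0]`. The integrand is the square of the
error of linear interpolation of the convex function `y ↦ y ^ p` at `x + (t₂ - t₁)` from the nodes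
`x` and `x + Δ`. This error is at most `x ^ p` in absolute value (both the value and the
interpolant lie in `[0, x ^ p]`) and, by tangent-line inequalities, at most `Δ² x ^ (p - 2)`.
Integrating the minimum of the squares of these bounds over `x > t₁ - T`, split at `x = Δ`, gives
`Δ⁴ (t₃ - T) ^ (2H - 4)` up to a factor depending only on `H`.
-/

open Real MeasureTheory Set

theorem rpow_tangent_line_le {p x y : ℝ} (hp : p ≤ 0) (hx : 0 < x) (hy : 0 < y) :
    x ^ p + p * x ^ (p - 1) * (y - x) ≤ y ^ p := by
  have hyx : 0 < y / x := div_pos hy hx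
  have bernoulli : 1 + p * (y / x - 1) ≤ (y / x) ^ p := by
    have := mul_le_mul_of_nonpos_left (log_le_sub_one_of_pos hyx) hp
    rw [rpow_def_of_pos hyx]
    linarith [add_one_le_exp (log (y / x) * p)]
  calc x ^ p + p * x ^ (p - 1) * (y - x) = x ^ p * (1 + p * (y / x - 1)) := by
        rw [rpow_sub_one hx.ne']; field_simp
    _ ≤ x ^ p * (y / x) ^ p := by gcongr
    _ = y ^ p := by rw [div_rpow hy.le hx.le]; field_simp

theorem rpow_le_two_rpow_neg_mul_rpow {r x y : ℝ} (hr : r ≤ 0) (hy : 0 < y) (hyx : y ≤ 2 * x) :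
    x ^ r ≤ 2 ^ (-r) * y ^ r := by
  calc x ^ r ≤ (y / 2) ^ r := rpow_le_rpow_of_nonpos (by positivity) (by linarith) hr
    _ = 2 ^ (-r) * y ^ r := by
      rw [div_rpow hy.le zero_le_two, rpow_neg zero_le_two, div_eq_inv_mul]

/-- The kernel error of the trapezoidal scheme at time `s` is
`rpowInterpError (H - 1/2) (t₁ - s) (t₂ - s) (t₃ - s)`. -/
noncomputable def rpowInterpError (p a b c : ℝ) : ℝ :=
  b ^ p - (c - b) / (c - a) * a ^ p - (b - a) / (c - a) * c ^ p

section rpowInterpError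

variable {p a b c : ℝ}

theorem mul_rpowInterpError (hac : a ≠ c) :
    (c - a) * rpowInterpError p a b c = (c - a) * b ^ p - (c - b) * a ^ p - (b - a) * c ^ p := by
  have : c - a ≠ 0 := sub_ne_zero.2 hac.symm
  rw [rpowInterpError]; field_simp

theorem rpowInterpError_nonpos (hp : p ≤ 0) (ha : 0 < a) (hab : a ≤ b) (hbc : b ≤ c)
    (hac : a < c) : rpowInterpError p a b c ≤ 0 := by
  have hb : 0 < b := ha.trans_le hab
  have tangent_a := rpow_tangent_line_le hp hb ha
  have tangent_c := rpow_tangent_line_le hp hb (hb.trans_le hbc)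
  refine nonpos_of_mul_nonpos_right ?_ (sub_pos.2 hac)
  rw [mul_rpowInterpError hac.ne]
  nlinarith [mul_le_mul_of_nonneg_left tangent_a (sub_nonneg.2 hbc),
    mul_le_mul_of_nonneg_left tangent_c (sub_nonneg.2 hab)]

theorem abs_rpowInterpError_le_rpow (hp : p ≤ 0) (ha : 0 < a) (hab : a ≤ b) (hbc : b ≤ c)
    (hac : a < c) : |rpowInterpError p a b c| ≤ a ^ p := by
  have hca : 0 < c - a := sub_pos.2 hac
  have hb : 0 < b := ha.trans_le hab
  have hc : 0 < c := hb.trans_le hbc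
  have hw₁ : 0 ≤ (c - b) / (c - a) := div_nonneg (by linarith) hca.le
  have hw₂ : 0 ≤ (b - a) / (c - a) := div_nonneg (by linarith) hca.le
  have hsum : (c - b) / (c - a) + (b - a) / (c - a) = 1 := by field_simp; ring
  rw [rpowInterpError, sub_sub]
  refine abs_sub_le_of_nonneg_of_le (rpow_nonneg hb.le p) (rpow_le_rpow_of_nonpos ha hab hp)
    (by positivity) ?_
  calc (c - b) / (c - a) * a ^ p + (b - a) / (c - a) * c ^ p
      ≤ (c - b) / (c - a) * a ^ p + (b - a) / (c - a) * a ^ p := by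
        grw [rpow_le_rpow_of_nonpos ha hac.le hp]
    _ = a ^ p := by rw [← add_mul, hsum, one_mul]

theorem abs_rpowInterpError_le (hp : p ≤ 0) (ha : 0 < a) (hab : a ≤ b) (hbc : b ≤ c)
    (hac : a < c) : |rpowInterpError p a b c| ≤ p * (p - 1) * (c - a) ^ 2 * a ^ (p - 2) := by
  have hca : 0 < c - a := sub_pos.2 hac
  have hb : 0 < b := ha.trans_le hab
  have hc : 0 < c := hb.trans_le hbc
  -- tangent lines at `a` and at `c`, evaluated at `b`; then at `a` for the exponent `p - 1`
  have tangent_a := rpow_tangent_line_le hp ha hb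
  have tangent_c := rpow_tangent_line_le hp hc hb
  have tangent_a' := rpow_tangent_line_le (by linarith : p - 1 ≤ 0) ha hc
  rw [show p - 1 - 1 = p - 2 by ring] at tangent_a'
  have hmono : c ^ (p - 1) ≤ a ^ (p - 1) := rpow_le_rpow_of_nonpos ha hac.le (by linarith)
  rw [abs_of_nonpos (rpowInterpError_nonpos hp ha hab hbc hac)]
  refine le_of_mul_le_mul_left ?_ hca
  calc (c - a) * -rpowInterpError p a b c
      = (c - b) * (a ^ p - b ^ p) + (b - a) * (c ^ p - b ^ p) := by
        rw [mul_neg, mul_rpowInterpError hac.ne]; ring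
    _ ≤ (c - b) * (-p * a ^ (p - 1) * (b - a)) + (b - a) * (p * c ^ (p - 1) * (c - b)) := by
        gcongr <;> linarith
    _ = -p * ((c - b) * (b - a)) * (a ^ (p - 1) - c ^ (p - 1)) := by ring
    _ ≤ -p * (c - a) ^ 2 * ((1 - p) * a ^ (p - 2) * (c - a)) := by
        have hρ : (c - b) * (b - a) ≤ (c - a) ^ 2 := by nlinarith
        have hp' : 0 ≤ -p := neg_nonneg.2 hp
        have hdiff : a ^ (p - 1) - c ^ (p - 1) ≤ (1 - p) * a ^ (p - 2) * (c - a) := by linarith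
        exact mul_le_mul (mul_le_mul_of_nonneg_left hρ hp') hdiff (sub_nonneg.2 hmono)
          (mul_nonneg hp' (sq_nonneg _))
    _ = (c - a) * (p * (p - 1) * (c - a) ^ 2 * a ^ (p - 2)) := by ring

theorem sq_rpowInterpError_le_rpow (hp : p ≤ 0) (ha : 0 < a) (hab : a ≤ b) (hbc : b ≤ c)
    (hac : a < c) : rpowInterpError p a b c ^ 2 ≤ a ^ (2 * p) := by
  calc rpowInterpError p a b c ^ 2 = |rpowInterpError p a b c| ^ 2 := (sq_abs _).symm
    _ ≤ (a ^ p) ^ 2 := by gcongr; exact abs_rpowInterpError_le_rpow hp ha hab hbc hac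
    _ = a ^ (2 * p) := by rw [← rpow_natCast, ← rpow_mul ha.le, mul_comm]; norm_num

theorem sq_rpowInterpError_le (hp₀ : -1 / 2 ≤ p) (hp : p ≤ 0) (ha : 0 < a) (hab : a ≤ b)
    (hbc : b ≤ c) (hac : a < c) :
    rpowInterpError p a b c ^ 2 ≤ (c - a) ^ 4 * a ^ (2 * p - 4) := by
  have hpp : p * (p - 1) ≤ 1 := by nlinarith
  have habs : |rpowInterpError p a b c| ≤ (c - a) ^ 2 * a ^ (p - 2) :=
    (abs_rpowInterpError_le hp ha hab hbc hac).trans (by grw [hpp, one_mul])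
  calc rpowInterpError p a b c ^ 2 = |rpowInterpError p a b c| ^ 2 := (sq_abs _).symm
    _ ≤ ((c - a) ^ 2 * a ^ (p - 2)) ^ 2 := by gcongr
    _ = (c - a) ^ 4 * a ^ (2 * p - 4) := by
      rw [mul_pow, ← pow_mul, ← rpow_natCast (a ^ (p - 2)), ← rpow_mul ha.le]
      congr 2; push_cast; ring

theorem sq_rpowInterpError_add_le_min {x β Δ : ℝ} (hp₀ : -1 / 2 ≤ p) (hp : p ≤ 0) (hx : 0 < x)
    (hβ : 0 ≤ β) (hβΔ : β ≤ Δ) (hΔ : 0 < Δ) :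
    rpowInterpError p x (x + β) (x + Δ) ^ 2 ≤ min (x ^ (2 * p)) (Δ ^ 4 * x ^ (2 * p - 4)) := by
  refine le_min (sq_rpowInterpError_le_rpow hp hx (by linarith) (by linarith) (by linarith)) ?_
  have := sq_rpowInterpError_le hp₀ hp hx (by linarith : x ≤ x + β) (by linarith)
    (by linarith : x < x + Δ)
  rwa [add_sub_cancel_left] at this

end rpowInterpError

section MinRpowMajorant

variable {f : ℝ → ℝ} {q Δ : ℝ}

theorem setIntegral_Ioc_zero_le_of_le_rpow (hq : -1 < q) (hf : ∀ x, 0 < x → 0 ≤ f x)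
    (hle : ∀ x, 0 < x → f x ≤ x ^ q) (hΔ : 0 ≤ Δ) :
    ∫ x in Ioc 0 Δ, f x ≤ Δ ^ (q + 1) / (q + 1) := by
  have hrpow : IntegrableOn (fun x : ℝ ↦ x ^ q) (Ioc 0 Δ) :=
    (intervalIntegral.intervalIntegrable_rpow' hq).1
  calc ∫ x in Ioc 0 Δ, f x ≤ ∫ x in Ioc 0 Δ, x ^ q :=
        integral_mono_of_nonneg ((ae_restrict_iff' measurableSet_Ioc).2 (.of_forall
          fun x hx ↦ hf x hx.1)) hrpow ((ae_restrict_iff' measurableSet_Ioc).2 (.of_forall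
          fun x hx ↦ hle x hx.1))
    _ = Δ ^ (q + 1) / (q + 1) := by
      rw [← intervalIntegral.integral_of_le hΔ, integral_rpow (.inl hq),
        zero_rpow (by linarith), sub_zero]

theorem setIntegral_Ioi_le_of_le_mul_rpow (hq : q < 3) (hf : ∀ x, 0 < x → 0 ≤ f x)
    (hle : ∀ x, 0 < x → f x ≤ Δ ^ 4 * x ^ (q - 4)) {m : ℝ} (hm : 0 < m) :
    ∫ x in Ioi m, f x ≤ Δ ^ 4 * m ^ (q - 3) / (3 - q) := by
  have hrpow : IntegrableOn (fun x : ℝ ↦ Δ ^ 4 * x ^ (q - 4)) (Ioi m) :=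
    (integrableOn_Ioi_rpow_of_lt (by linarith) hm).const_mul _
  calc ∫ x in Ioi m, f x ≤ ∫ x in Ioi m, Δ ^ 4 * x ^ (q - 4) :=
        integral_mono_of_nonneg ((ae_restrict_iff' measurableSet_Ioi).2 (.of_forall
          fun x hx ↦ hf x (hm.trans hx))) hrpow ((ae_restrict_iff' measurableSet_Ioi).2
          (.of_forall fun x hx ↦ hle x (hm.trans hx)))
    _ = Δ ^ 4 * m ^ (q - 3) / (3 - q) := by
      rw [integral_const_mul, integral_Ioi_rpow_of_lt (by linarith) hm,
        show q - 4 + 1 = q - 3 by ring, neg_div, ← div_neg, neg_sub]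
      ring

theorem integrableOn_Ioi_zero_of_le_min_rpow (hq : -1 < q) (hq₃ : q < 3) (hΔ : 0 < Δ)
    (hfm : Measurable f) (hf : ∀ x, 0 < x → 0 ≤ f x)
    (hle : ∀ x, 0 < x → f x ≤ min (x ^ q) (Δ ^ 4 * x ^ (q - 4))) : IntegrableOn f (Ioi 0) := by
  have hnorm : ∀ x, 0 < x → ‖f x‖ = f x := fun x hx ↦ Real.norm_of_nonneg (hf x hx)
  rw [← Ioc_union_Ioi_eq_Ioi hΔ.le]
  refine IntegrableOn.union ?_ ?_
  · refine (intervalIntegral.intervalIntegrable_rpow' hq).1.mono' hfm.aestronglyMeasurable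
      ((ae_restrict_iff' measurableSet_Ioc).2 (.of_forall fun x hx ↦ ?_))
    rw [hnorm x hx.1]
    exact (hle x hx.1).trans (min_le_left _ _)
  · refine ((integrableOn_Ioi_rpow_of_lt (a := q - 4) (by linarith) hΔ).const_mul (Δ ^ 4)).mono'
      hfm.aestronglyMeasurable ((ae_restrict_iff' measurableSet_Ioi).2 (.of_forall fun x hx ↦ ?_))
    rw [hnorm x (hΔ.trans hx)]
    exact (hle x (hΔ.trans hx)).trans (min_le_right _ _)

theorem setIntegral_Ioi_le_of_le_min_rpow (hq : -1 < q) (hq₃ : q < 3) (hΔ : 0 < Δ)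
    (hfm : Measurable f) (hf : ∀ x, 0 < x → 0 ≤ f x)
    (hle : ∀ x, 0 < x → f x ≤ min (x ^ q) (Δ ^ 4 * x ^ (q - 4))) {u : ℝ} (hu : 0 ≤ u) :
    ∫ x in Ioi u, f x ≤ 2 ^ (3 - q) * (1 / (q + 1) + 1 / (3 - q)) * Δ ^ 4 * (u + Δ) ^ (q - 3) := by
  have hq₁ : 0 < q + 1 := by linarith
  have hnear : ∀ x, 0 < x → f x ≤ x ^ q := fun x hx ↦ (hle x hx).trans (min_le_left _ _)
  have hfar : ∀ x, 0 < x → f x ≤ Δ ^ 4 * x ^ (q - 4) := fun x hx ↦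
    (hle x hx).trans (min_le_right _ _)
  have hmax : ∫ x in Ioi u, f x ≤ (1 / (q + 1) + 1 / (3 - q)) * Δ ^ 4 * max u Δ ^ (q - 3) := by
    rcases le_or_gt Δ u with hΔu | huΔ
    · rw [max_eq_left hΔu]
      grw [setIntegral_Ioi_le_of_le_mul_rpow hq₃ hf hfar (hΔ.trans_le hΔu), div_eq_inv_mul,
        ← one_div, mul_assoc]
      gcongr ?_ * _
      linarith [one_div_pos.2 hq₁]
    · have hfi := integrableOn_Ioi_zero_of_le_min_rpow hq hq₃ hΔ hfm hf hle
      have hsplit : ∫ x in Ioi 0, f x = (∫ x in Ioc 0 Δ, f x) + ∫ x in Ioi Δ, f x := by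
        rw [← Ioc_union_Ioi_eq_Ioi hΔ.le, setIntegral_union Ioc_disjoint_Ioi_same
          measurableSet_Ioi (hfi.mono_set Ioc_subset_Ioi_self) (hfi.mono_set (Ioi_subset_Ioi hΔ.le))]
      have hpow : Δ ^ (q + 1) = Δ ^ 4 * Δ ^ (q - 3) := by
        rw [← rpow_natCast, ← rpow_add hΔ]; congr 1; push_cast; ring
      calc ∫ x in Ioi u, f x ≤ ∫ x in Ioi 0, f x :=
            setIntegral_mono_set hfi ((ae_restrict_iff' measurableSet_Ioi).2 (.of_forall hf))
              (Ioi_subset_Ioi hu).eventuallyLE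
        _ ≤ Δ ^ (q + 1) / (q + 1) + Δ ^ 4 * Δ ^ (q - 3) / (3 - q) := by
            rw [hsplit]
            exact add_le_add (setIntegral_Ioc_zero_le_of_le_rpow hq hf hnear hΔ.le)
              (setIntegral_Ioi_le_of_le_mul_rpow hq₃ hf hfar hΔ)
        _ = (1 / (q + 1) + 1 / (3 - q)) * Δ ^ 4 * max u Δ ^ (q - 3) := by
            rw [max_eq_right huΔ.le, hpow]; ring
  calc ∫ x in Ioi u, f x ≤ (1 / (q + 1) + 1 / (3 - q)) * Δ ^ 4 * max u Δ ^ (q - 3) := hmax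
    _ ≤ (1 / (q + 1) + 1 / (3 - q)) * Δ ^ 4 * (2 ^ (3 - q) * (u + Δ) ^ (q - 3)) := by
        gcongr
        have := rpow_le_two_rpow_neg_mul_rpow (r := q - 3) (x := max u Δ) (y := u + Δ)
          (by linarith) (by linarith) (by linarith [le_max_left u Δ, le_max_right u Δ])
        rwa [neg_sub] at this
    _ = 2 ^ (3 - q) * (1 / (q + 1) + 1 / (3 - q)) * Δ ^ 4 * (u + Δ) ^ (q - 3) := by ring

end MinRpowMajorant

theorem setIntegral_Icc_comp_sub_left (f : ℝ → ℝ) {a b : ℝ} (hab : a ≤ b) (d : ℝ) :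
    ∫ s in Icc a b, f (d - s) = ∫ x in Ioc (d - b) (d - a), f x := by
  rw [integral_Icc_eq_integral_Ioc, ← intervalIntegral.integral_of_le hab,
    intervalIntegral.integral_comp_sub_left, intervalIntegral.integral_of_le (by linarith)]

theorem sqrt_mul_pow_four_mul_rpow_two_mul {K Δ τ r : ℝ} (hK : 0 ≤ K) (hτ : 0 ≤ τ) :
    √(K * Δ ^ 4 * τ ^ (2 * r)) = √K * Δ ^ 2 * τ ^ r := by
  rw [mul_assoc, sqrt_mul hK, mul_assoc, ← sqrt_sq (by positivity : 0 ≤ Δ ^ 2 * τ ^ r)]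
  congr 2
  rw [mul_pow, ← pow_mul, ← rpow_natCast (τ ^ r), ← rpow_mul hτ, mul_comm r]
  norm_num

/-- Trapezoidal-scheme kernel estimate for the rough Bergomi kernel
`g(t,s) = (t−s)^{H−1/2}`: for `H ∈ (0,1/2]` there is a constant `C = C(H)` such that
for all `t ≤ T ≤ t₁ ≤ t₂ ≤ t₃` with `t₁ < t₃`,
`(∫_t^T ((t₂−s)^{H−1/2} − ((t₃−t₂)/(t₃−t₁))(t₁−s)^{H−1/2}
  − ((t₂−t₁)/(t₃−t₁))(t₃−s)^{H−1/2})² ds)^{1/2} ≤ C (t₃−t₁)² (t₃−T)^{H−2}`. -/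
theorem rough_bergomi_trapezoidal_kernel_estimate
    (H : ℝ) (hH0 : 0 < H) (hH : H ≤ 1 / 2) :
    ∃ C : ℝ, ∀ t T t₁ t₂ t₃ : ℝ, t ≤ T → T ≤ t₁ → t₁ ≤ t₂ → t₂ ≤ t₃ → t₁ < t₃ →
      Real.sqrt (∫ s in Set.Icc t T,
          ((t₂ - s) ^ (H - 1 / 2)
            - ((t₃ - t₂) / (t₃ - t₁)) * (t₁ - s) ^ (H - 1 / 2)
            - ((t₂ - t₁) / (t₃ - t₁)) * (t₃ - s) ^ (H - 1 / 2)) ^ 2)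
        ≤ C * (t₃ - t₁) ^ 2 * (t₃ - T) ^ (H - 2) := by
  have hq₁ : 0 < 2 * (H - 1 / 2) + 1 := by linarith
  have hq₃ : 0 < 3 - 2 * (H - 1 / 2) := by linarith
  set q := 2 * (H - 1 / 2) with hq
  set K := 2 ^ (3 - q) * (1 / (q + 1) + 1 / (3 - q))
  have hK : 0 ≤ K := mul_nonneg (by positivity)
    (add_nonneg (one_div_nonneg.2 hq₁.le) (one_div_nonneg.2 hq₃.le))
  refine ⟨√K, fun t T t₁ t₂ t₃ htT hTt₁ h₁₂ h₂₃ h₁₃ ↦ ?_⟩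
  set g : ℝ → ℝ := fun x ↦ rpowInterpError (H - 1 / 2) x (x + (t₂ - t₁)) (x + (t₃ - t₁)) ^ 2
  have hΔ : 0 < t₃ - t₁ := by linarith
  have hgm : Measurable g := by simp only [g, rpowInterpError]; fun_prop
  have hle : ∀ x, 0 < x → g x ≤ min (x ^ q) ((t₃ - t₁) ^ 4 * x ^ (q - 4)) := fun x hx ↦
    sq_rpowInterpError_add_le_min (by linarith) (by linarith) hx (by linarith) (by linarith) hΔ
  have hint : ∫ x in Ioc (t₁ - T) (t₁ - t), g x ≤ K * (t₃ - t₁) ^ 4 * (t₃ - T) ^ (2 * (H - 2)) :=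
    calc ∫ x in Ioc (t₁ - T) (t₁ - t), g x ≤ ∫ x in Ioi (t₁ - T), g x :=
          setIntegral_mono_set ((integrableOn_Ioi_zero_of_le_min_rpow (by linarith) (by linarith)
            hΔ hgm (fun x _ ↦ sq_nonneg _) hle).mono_set (Ioi_subset_Ioi (by linarith)))
            (.of_forall fun x ↦ sq_nonneg _) Ioc_subset_Ioi_self.eventuallyLE
      _ ≤ K * (t₃ - t₁) ^ 4 * (t₁ - T + (t₃ - t₁)) ^ (q - 3) :=
          setIntegral_Ioi_le_of_le_min_rpow (by linarith) (by linarith) hΔ hgm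
            (fun x _ ↦ sq_nonneg _) hle (by linarith)
      _ = K * (t₃ - t₁) ^ 4 * (t₃ - T) ^ (2 * (H - 2)) := by rw [hq]; ring_nf
  calc _ = √(∫ x in Ioc (t₁ - T) (t₁ - t), g x) := by
        rw [← setIntegral_Icc_comp_sub_left g htT]
        congr 1
        refine setIntegral_congr_fun measurableSet_Icc fun s _ ↦ ?_
        simp only [g, rpowInterpError]
        ring_nf
    _ ≤ √(K * (t₃ - t₁) ^ 4 * (t₃ - T) ^ (2 * (H - 2))) := sqrt_le_sqrt hint
    _ = √K * (t₃ - t₁) ^ 2 * (t₃ - T) ^ (H - 2) :=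
        sqrt_mul_pow_four_mul_rpow_two_mul hK (by linarith)
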